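/- Let G be a finite simple connected graph that satisfies the substructure property and let x be a vertex of G such that, in case x is a cut vertex of G, every x-component of G also satisfies the substructure property. If evc(G) < evc_x(G), then G is Type 1 with respect to x, i.e., evc(G_x^+) = evc_x(G). -/
import Mathlib


open SimpleGraph

namespace EVC

variable {V : Type}

/-- `S` is a vertex cover of `G`. -/
def IsCover (G : SimpleGraph V) (S : Set V) : Prop :=
  ∀ ⦃u v : V⦄, G.Adj u v → u ∈ S ∨ v ∈ S

/-- A valid movement of guards from configuration `C` to configuration `C'`, witnessed by a
multiset `M` of (source, target) pairs (a bijection between the two multisets of guards):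
every guard either stays in place or moves to an adjacent vertex. -/
def ValidMove (G : SimpleGraph V) (C C' : Multiset V) (M : Multiset (V × V)) : Prop :=
  M.map Prod.fst = C ∧ M.map Prod.snd = C' ∧ ∀ p ∈ M, p.1 = p.2 ∨ G.Adj p.1 p.2

/-- A defense strategy on `G` with `k` guards: a nonempty family of vertex-cover
configurations of size `k` such that any attack on an edge can be defended by a valid
move staying within the family. -/
def IsDefense (G : SimpleGraph V) (k : ℕ) (F : Set (Multiset V)) : Prop :=
  F.Nonempty ∧
  (∀ C ∈ F, Multiset.card C = k ∧ IsCover G {v | v ∈ C}) ∧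
  (∀ C ∈ F, ∀ u v : V, G.Adj u v →
    ∃ C' ∈ F, ∃ M : Multiset (V × V), ValidMove G C C' M ∧ ((u, v) ∈ M ∨ (v, u) ∈ M))

/-- The eternal vertex cover number of `G`. -/
noncomputable def evc (G : SimpleGraph V) : ℕ :=
  sInf {k | ∃ F : Set (Multiset V), IsDefense G k F}

/-- `evc_S(G)`: the minimum number of guards of a defense strategy on `G` in which every
vertex of `S` is occupied in every configuration. -/
noncomputable def evcOn (G : SimpleGraph V) (S : Set V) : ℕ :=
  sInf {k | ∃ F : Set (Multiset V), IsDefense G k F ∧ ∀ C ∈ F, ∀ s ∈ S, s ∈ C}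

/-- `C` is an eternal vertex cover configuration of `G`: it belongs to some defense strategy. -/
def IsEvcConfig (G : SimpleGraph V) (C : Multiset V) : Prop :=
  ∃ (k : ℕ) (F : Set (Multiset V)), IsDefense G k F ∧ C ∈ F

open Classical in
/-- The number of guards of configuration `C` that lie in the set `S`. -/
noncomputable def guardsOn (C : Multiset V) (S : Set V) : ℕ :=
  Multiset.card (C.filter (fun v => v ∈ S))

/-- `G_x^+`: the graph `G` together with one new vertex (`none`) adjacent only to `x`. -/
def addPendant (G : SimpleGraph V) (x : V) : SimpleGraph (Option V) :=
  SimpleGraph.fromRel (fun a b =>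
    (∃ u w : V, a = some u ∧ b = some w ∧ G.Adj u w) ∨ (a = none ∧ b = some x))

/-- The induced subgraph of `G` obtained by deleting the vertex `x`. -/
abbrev delVert (G : SimpleGraph V) (x : V) : SimpleGraph {v : V | v ≠ x} :=
  G.induce {v : V | v ≠ x}

/-- `x` is a cut vertex of `G`: deleting `x` separates two vertices that were connected. -/
def IsCutVertex (G : SimpleGraph V) (x : V) : Prop :=
  ∃ (u v : V) (hu : u ≠ x) (hv : v ≠ x), G.Reachable u v ∧
    ¬ (delVert G x).Reachable ⟨u, hu⟩ ⟨v, hv⟩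

/-- `G` is Type 1 with respect to `x`: `evc(G_x^+) = evc_x(G)`. -/
def Type1 (G : SimpleGraph V) (x : V) : Prop := evc (addPendant G x) = evcOn G {x}

/-- `G` is Type 2 with respect to `x`: `evc(G_x^+) > evc_x(G)`. -/
def Type2 (G : SimpleGraph V) (x : V) : Prop := evcOn G {x} < evc (addPendant G x)

/-- The vertex set of the `x`-component of `G` corresponding to the connected component `H`
of `G − x`: the vertices of `H` together with `x`. -/
def xCompSet (G : SimpleGraph V) (x : V) (H : (delVert G x).ConnectedComponent) : Set V :=
  insert x (Subtype.val '' H.supp)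

lemma x_mem_xCompSet (G : SimpleGraph V) (x : V) (H : (delVert G x).ConnectedComponent) :
    x ∈ xCompSet G x H := Set.mem_insert _ _

/-- `evc_x(G_i)` for the `x`-component `G_i` of `G` corresponding to `H`. -/
noncomputable def evcComp (G : SimpleGraph V) (x : V)
    (H : (delVert G x).ConnectedComponent) : ℕ :=
  evcOn (G.induce (xCompSet G x H)) {(⟨x, x_mem_xCompSet G x H⟩ : ↥(xCompSet G x H))}

/-- The `x`-component of `G` corresponding to `H` is Type 1 with respect to `x`. -/
def CompType1 (G : SimpleGraph V) (x : V) (H : (delVert G x).ConnectedComponent) : Prop :=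
  Type1 (G.induce (xCompSet G x H)) ⟨x, x_mem_xCompSet G x H⟩

/-- The `x`-component of `G` corresponding to `H` is Type 2 with respect to `x`. -/
def CompType2 (G : SimpleGraph V) (x : V) (H : (delVert G x).ConnectedComponent) : Prop :=
  Type2 (G.induce (xCompSet G x H)) ⟨x, x_mem_xCompSet G x H⟩

/-- The substructure property: for every non-cut vertex `x` of `G` and every `x`-extension
`G'` of `G` (i.e. every connected graph `G'` having `G` as an `x`-component, via an
isomorphism `φ` identifying `x` with a cut vertex `x'` of `G'`), every eternal vertex cover
configuration of `G'` has at least `evc_x(G) − 1` guards on the copy of `V(G)` in case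
`evc(G_x^+) ≤ evc_x(G)`, and at least `evc_x(G)` guards on it in case
`evc(G_x^+) > evc_x(G)`. -/
def SubstructureProperty (G : SimpleGraph V) : Prop :=
  ∀ x : V, ¬ IsCutVertex G x →
  ∀ (V' : Type) [Finite V'], ∀ (G' : SimpleGraph V') (x' : V'),
    G'.Connected → IsCutVertex G' x' →
  ∀ (H : (delVert G' x').ConnectedComponent) (φ : G ≃g G'.induce (xCompSet G' x' H)),
    (φ x : ↥(xCompSet G' x' H)).1 = x' →
  ∀ C' : Multiset V', IsEvcConfig G' C' →
    (evc (addPendant G x) ≤ evcOn G {x} →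
        evcOn G {x} - 1 ≤ guardsOn C' (xCompSet G' x' H)) ∧
    (evcOn G {x} < evc (addPendant G x) →
        evcOn G {x} ≤ guardsOn C' (xCompSet G' x' H))

/-- The `x`-component corresponding to `H` is edge-disjoint from (the induced subgraph on)
the vertex set `S`. -/
def EdgeDisjointComp (G : SimpleGraph V) (S : Set V) (x : V)
    (H : (delVert G x).ConnectedComponent) : Prop :=
  ∀ u v : V, G.Adj u v → u ∈ S → v ∈ S →
    ¬(u ∈ xCompSet G x H ∧ v ∈ xCompSet G x H)

/-- The components attached to the vertex set `S` (of a block or a path): pairs `(x, H)`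
with `x ∈ X ∩ S` a cut vertex on `S` and `H` a component of `G − x` whose `x`-component
is edge-disjoint from `S`. -/
def SComponents (G : SimpleGraph V) (X S : Set V) :
    Set (Σ x : V, (delVert G x).ConnectedComponent) :=
  {p | p.1 ∈ X ∧ p.1 ∈ S ∧ EdgeDisjointComp G S p.1 p.2}

/-- `χ(G, S)` where `S` is the vertex set of a block or a path of `G` and `X` is the set
of cut vertices of `G`. -/
noncomputable def chi (G : SimpleGraph V) (X S : Set V) : ℕ :=
  Nat.card ↥(S ∩ X)
    + ∑ᶠ p ∈ {p ∈ SComponents G X S | CompType1 G p.1 p.2}, (evcComp G p.1 p.2 - 2)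
    + ∑ᶠ p ∈ {p ∈ SComponents G X S | CompType2 G p.1 p.2}, (evcComp G p.1 p.2 - 1)

/-- The set `S` induces a block of `G`: a maximal (vertex set of a) connected induced
subgraph having no cut vertex. -/
def IsBlock (G : SimpleGraph V) (S : Set V) : Prop :=
  (G.induce S).Connected ∧ (∀ y : ↥S, ¬ IsCutVertex (G.induce S) y) ∧
  ∀ T : Set V, S ⊆ T → (G.induce T).Connected →
    (∀ y : ↥T, ¬ IsCutVertex (G.induce T) y) → T ⊆ S

/-- The induced subgraph of `G` on `S` is a cycle: there is a chordless cycle of `G` whose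
vertex set is exactly `S`. -/
def IsCycleSet (G : SimpleGraph V) (S : Set V) : Prop :=
  ∃ (a : V) (c : G.Walk a a), c.IsCycle ∧ S = {v | v ∈ c.support} ∧
    ∀ u v : V, u ∈ c.support → v ∈ c.support → G.Adj u v → s(u, v) ∈ c.edges

/-- `G` is chordal: every cycle of length at least four has a chord. -/
def IsChordal (G : SimpleGraph V) : Prop :=
  ∀ (a : V) (c : G.Walk a a), c.IsCycle → 4 ≤ c.length →
    ∃ u v : V, u ∈ c.support ∧ v ∈ c.support ∧ G.Adj u v ∧ s(u, v) ∉ c.edges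

/-- `G` is biconnected (2-connected): connected, at least three vertices, no cut vertex. -/
def IsBiconnected (G : SimpleGraph V) : Prop :=
  G.Connected ∧ 3 ≤ Nat.card V ∧ ∀ x : V, ¬ IsCutVertex G x

/-- `G` is a cactus: connected, and any two distinct simple cycles share at most one vertex. -/
def IsCactus (G : SimpleGraph V) : Prop :=
  G.Connected ∧
  ∀ (a b : V) (c₁ : G.Walk a a) (c₂ : G.Walk b b), c₁.IsCycle → c₂.IsCycle →
    {e | e ∈ c₁.edges} ≠ {e | e ∈ c₂.edges} →
    {v | v ∈ c₁.support ∧ v ∈ c₂.support}.Subsingleton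

/-- `mvc_S(G)`: minimum cardinality of a vertex cover of `G` containing all vertices of `S`. -/
noncomputable def mvcOn (G : SimpleGraph V) (S : Set V) : ℕ :=
  sInf {k | ∃ T : Set V, IsCover G T ∧ S ⊆ T ∧ Nat.card ↥T = k}

/-- `P` is an induced path of `G`. -/
def IsInducedPath (G : SimpleGraph V) {a b : V} (P : G.Walk a b) : Prop :=
  P.IsPath ∧ ∀ u v : V, u ∈ P.support → v ∈ P.support → G.Adj u v → s(u, v) ∈ P.edges

/-- `P` is obtained by removing one edge from an induced cycle of `G`. -/
def IsInducedCycleMinusEdge (G : SimpleGraph V) {a b : V} (P : G.Walk a b) : Prop :=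
  P.IsPath ∧ 2 ≤ P.length ∧ G.Adj a b ∧
    ∀ u v : V, u ∈ P.support → v ∈ P.support → G.Adj u v →
      (s(u, v) ∈ P.edges ∨ s(u, v) = s(a, b))

open Classical in
/-- `P` is an eventful path of `G` (with `X` the set of cut vertices of `G`): it is an
induced path or an induced cycle minus an edge, its endpoints lie in `X`, and every
(contiguous) subpath of `P` with both endpoints in `X` has an even number of vertices
outside `X`. -/
def Eventful (G : SimpleGraph V) (X : Set V) {a b : V} (P : G.Walk a b) : Prop :=
  (IsInducedPath G P ∨ IsInducedCycleMinusEdge G P) ∧ a ∈ X ∧ b ∈ X ∧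
    ∀ i j : Fin P.support.length, (i : ℕ) ≤ (j : ℕ) →
      P.support.get i ∈ X → P.support.get j ∈ X →
      Even (Multiset.countP (fun v => v ∉ X)
        (((P.support.drop (i : ℕ)).take ((j : ℕ) - (i : ℕ) + 1) : List V) : Multiset V))

/-- The vertex bunch `VB_G(P)` of the path `P`: `V(P)` together with all vertices of the
`P`-components. -/
def vertexBunch (G : SimpleGraph V) (X : Set V) {a b : V} (P : G.Walk a b) : Set V :=
  {v | v ∈ P.support} ∪
    ⋃ p ∈ SComponents G X {v | v ∈ P.support}, xCompSet G p.1 p.2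

section Aux

lemma adj_some_some {G : SimpleGraph V} {x u w : V} (h : G.Adj u w) :
    (addPendant G x).Adj (some u) (some w) := by
  refine ⟨by simpa using h.ne, Or.inl (Or.inl ⟨u, w, rfl, rfl, h⟩)⟩

lemma adj_none_x {G : SimpleGraph V} {x : V} :
    (addPendant G x).Adj none (some x) :=
  ⟨by simp, Or.inl (Or.inr ⟨rfl, rfl⟩)⟩

lemma adj_cases {G : SimpleGraph V} {x : V} {a b : Option V}
    (h : (addPendant G x).Adj a b) :
    (∃ u w : V, a = some u ∧ b = some w ∧ G.Adj u w) ∨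
      (a = none ∧ b = some x) ∨ (a = some x ∧ b = none) := by
  rcases h with ⟨hne, h | h⟩
  · rcases h with ⟨u, w, h1, h2, h3⟩ | ⟨h1, h2⟩
    · exact Or.inl ⟨u, w, h1, h2, h3⟩
    · exact Or.inr (Or.inl ⟨h1, h2⟩)
  · rcases h with ⟨u, w, h1, h2, h3⟩ | ⟨h1, h2⟩
    · exact Or.inl ⟨w, u, h2, h1, h3.symm⟩
    · exact Or.inr (Or.inr ⟨h2, h1⟩)

lemma exists_defense {W : Type} [Finite W] (G : SimpleGraph W) :
    ∃ k, ∃ F : Set (Multiset W), IsDefense G k F := by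
  classical
  have : Fintype W := Fintype.ofFinite W
  set C : Multiset W := (Finset.univ : Finset W).val with hCdef
  refine ⟨Multiset.card C, {C}, ⟨C, rfl⟩, ?_, ?_⟩
  · intro C' hC'
    rw [Set.mem_singleton_iff] at hC'
    subst hC'
    exact ⟨rfl, fun u v _ => Or.inl (by simp [hCdef])⟩
  · intro C' hC' u v huv
    rw [Set.mem_singleton_iff] at hC'
    subst hC'
    have huC : u ∈ C := by simp [hCdef]
    have hvC : v ∈ C.erase u := by
      refine Multiset.mem_erase_of_ne huv.ne' |>.mpr (by simp [hCdef])
    set X : Multiset W := (C.erase u).erase v with hXdef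
    refine ⟨C, rfl, (u, v) ::ₘ (v, u) ::ₘ X.map (fun w => (w, w)), ⟨?_, ?_, ?_⟩, Or.inl ?_⟩
    · simp only [Multiset.map_cons, Multiset.map_map]
      have : (X.map (Prod.fst ∘ fun w => (w, w))) = X := by
        simp [Multiset.map_id']
      rw [this, hXdef, Multiset.cons_erase hvC, Multiset.cons_erase huC]
    · simp only [Multiset.map_cons, Multiset.map_map]
      have : (X.map (Prod.snd ∘ fun w => (w, w))) = X := by
        simp [Multiset.map_id']
      rw [this, hXdef, Multiset.erase_comm]
      have huC' : u ∈ C.erase v :=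
        (Multiset.mem_erase_of_ne huv.ne).mpr huC
      have hvC2 : v ∈ C := by simp [hCdef]
      rw [Multiset.cons_erase huC', Multiset.cons_erase hvC2]
    · intro p hp
      rcases Multiset.mem_cons.mp hp with rfl | hp
      · exact Or.inr huv
      rcases Multiset.mem_cons.mp hp with rfl | hp
      · exact Or.inr huv.symm
      · rcases Multiset.mem_map.mp hp with ⟨w, _, rfl⟩
        exact Or.inl rfl
    · exact Multiset.mem_cons_self _ _

lemma exists_defense_evc {W : Type} [Finite W] (G : SimpleGraph W) :
    ∃ F : Set (Multiset W), IsDefense G (evc G) F := by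
  obtain ⟨k, F, h⟩ := exists_defense G
  exact Nat.sInf_mem (⟨k, F, h⟩ : {k | ∃ F : Set (Multiset W), IsDefense G k F}.Nonempty)

lemma evcOn_le_evc_addPendant [Finite V] (G : SimpleGraph V) (x : V) :
    evcOn G {x} ≤ evc (addPendant G x) := by
  classical
  haveI : Fintype V := Fintype.ofFinite V
  obtain ⟨F', hF'⟩ := exists_defense_evc (addPendant G x)
  set k := evc (addPendant G x)
  set f : Option V → V := fun a => a.getD x with hfdef
  set push : Multiset (Option V) → Multiset V := fun C => C.map f with hpushdef
  have hxmem : ∀ C' ∈ F', x ∈ push C' := by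
    intro C' hC'
    have hcov := (hF'.2.1 C' hC').2
    rcases hcov (adj_none_x (G := G) (x := x)) with h | h
    · exact Multiset.mem_map.mpr ⟨none, h, rfl⟩
    · exact Multiset.mem_map.mpr ⟨some x, h, rfl⟩
  have hmem_set : k ∈ {k | ∃ F : Set (Multiset V),
      IsDefense G k F ∧ ∀ C ∈ F, ∀ s ∈ ({x} : Set V), s ∈ C} := by
    refine ⟨push '' F', ⟨?_, ?_, ?_⟩, ?_⟩
    · obtain ⟨C', hC'⟩ := hF'.1
      exact ⟨push C', Set.mem_image_of_mem _ hC'⟩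
    · rintro C ⟨C', hC', rfl⟩
      constructor
      · simpa [hpushdef] using (hF'.2.1 C' hC').1
      · intro u v huv
        rcases (hF'.2.1 C' hC').2 (adj_some_some (x := x) huv) with h | h
        · exact Or.inl (Multiset.mem_map.mpr ⟨some u, h, rfl⟩)
        · exact Or.inr (Multiset.mem_map.mpr ⟨some v, h, rfl⟩)
    · rintro C ⟨C', hC', rfl⟩ u v huv
      obtain ⟨C₂', hC₂', M', hvm, hdef⟩ :=
        hF'.2.2 C' hC' (some u) (some v) (adj_some_some (x := x) huv)
      refine ⟨push C₂', Set.mem_image_of_mem _ hC₂',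
        M'.map (Prod.map f f), ⟨?_, ?_, ?_⟩, ?_⟩
      · rw [Multiset.map_map]
        have : (Prod.fst ∘ Prod.map f f : Option V × Option V → V) = f ∘ Prod.fst := rfl
        rw [this, ← Multiset.map_map, hvm.1]
      · rw [Multiset.map_map]
        have : (Prod.snd ∘ Prod.map f f : Option V × Option V → V) = f ∘ Prod.snd := rfl
        rw [this, ← Multiset.map_map, hvm.2.1]
      · intro p hp
        rcases Multiset.mem_map.mp hp with ⟨q, hq, rfl⟩
        rcases hvm.2.2 q hq with h | h
        · exact Or.inl (by rw [Prod.map_fst, Prod.map_snd, h])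
        · rcases adj_cases h with ⟨u', w', h1, h2, h3⟩ | ⟨h1, h2⟩ | ⟨h1, h2⟩
          · refine Or.inr ?_
            rw [Prod.map_fst, Prod.map_snd, h1, h2]
            simpa [hfdef] using h3
          · exact Or.inl (by rw [Prod.map_fst, Prod.map_snd, h1, h2]; simp [hfdef])
          · exact Or.inl (by rw [Prod.map_fst, Prod.map_snd, h1, h2]; simp [hfdef])
      · rcases hdef with h | h
        · exact Or.inl (by simpa [hfdef] using Multiset.mem_map_of_mem (Prod.map f f) h)
        · exact Or.inr (by simpa [hfdef] using Multiset.mem_map_of_mem (Prod.map f f) h)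
    · rintro C ⟨C', hC', rfl⟩ s hs
      rw [Set.mem_singleton_iff] at hs
      subst hs
      exact hxmem C' hC'
  exact Nat.sInf_le hmem_set

lemma evc_addPendant_le [Finite V] (G : SimpleGraph V) (x : V) :
    evc (addPendant G x) ≤ evc G + 1 := by
  classical
  obtain ⟨F, hF⟩ := exists_defense_evc G
  set F' : Set (Multiset (Option V)) :=
    {D | ∃ C ∈ F, D = none ::ₘ C.map some ∨ D = some x ::ₘ C.map some} with hF'def
  -- helper: defending the pendant edge
  have hpend : ∀ D ∈ F', ∃ D₂ ∈ F', ∃ M : Multiset (Option V × Option V),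
      ValidMove (addPendant G x) D D₂ M ∧
        ((none, some x) ∈ M ∨ (some x, none) ∈ M) := by
    rintro D ⟨C, hC, hD⟩
    rcases hD with rfl | rfl
    · refine ⟨some x ::ₘ C.map some, ⟨C, hC, Or.inr rfl⟩,
        (none, some x) ::ₘ C.map (fun w => (some w, some w)), ⟨?_, ?_, ?_⟩, Or.inl ?_⟩
      · simp [Multiset.map_map, Function.comp]
      · simp [Multiset.map_map, Function.comp]
      · intro p hp
        rcases Multiset.mem_cons.mp hp with rfl | hp
        · exact Or.inr adj_none_x
        · rcases Multiset.mem_map.mp hp with ⟨w, _, rfl⟩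
          exact Or.inl rfl
      · exact Multiset.mem_cons_self _ _
    · refine ⟨none ::ₘ C.map some, ⟨C, hC, Or.inl rfl⟩,
        (some x, none) ::ₘ C.map (fun w => (some w, some w)), ⟨?_, ?_, ?_⟩, Or.inr ?_⟩
      · simp [Multiset.map_map, Function.comp]
      · simp [Multiset.map_map, Function.comp]
      · intro p hp
        rcases Multiset.mem_cons.mp hp with rfl | hp
        · exact Or.inr adj_none_x.symm
        · rcases Multiset.mem_map.mp hp with ⟨w, _, rfl⟩
          exact Or.inl rfl
      · exact Multiset.mem_cons_self _ _
  have hdefense : IsDefense (addPendant G x) (evc G + 1) F' := by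
    refine ⟨?_, ?_, ?_⟩
    · obtain ⟨C, hC⟩ := hF.1
      exact ⟨none ::ₘ C.map some, C, hC, Or.inl rfl⟩
    · rintro D ⟨C, hC, hD⟩
      have hcard : Multiset.card C = evc G := (hF.2.1 C hC).1
      have hcov := (hF.2.1 C hC).2
      have hcov' : ∀ {a b : Option V}, (addPendant G x).Adj a b →
          (∃ u : V, a = some u ∧ u ∈ C) ∨ (∃ u : V, b = some u ∧ u ∈ C) ∨
          (a = none ∧ b = some x) ∨ (a = some x ∧ b = none) := by
        intro a b hab
        rcases adj_cases hab with ⟨u, w, rfl, rfl, h3⟩ | h | h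
        · rcases hcov h3 with h | h
          · exact Or.inl ⟨u, rfl, h⟩
          · exact Or.inr (Or.inl ⟨w, rfl, h⟩)
        · exact Or.inr (Or.inr (Or.inl h))
        · exact Or.inr (Or.inr (Or.inr h))
      rcases hD with rfl | rfl
      · refine ⟨by simp [hcard], ?_⟩
        intro a b hab
        rcases hcov' hab with ⟨u, rfl, hu⟩ | ⟨u, rfl, hu⟩ | ⟨rfl, rfl⟩ | ⟨rfl, rfl⟩
        · exact Or.inl (Multiset.mem_cons_of_mem (Multiset.mem_map_of_mem some hu))
        · exact Or.inr (Multiset.mem_cons_of_mem (Multiset.mem_map_of_mem some hu))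
        · exact Or.inl (Multiset.mem_cons_self _ _)
        · exact Or.inr (Multiset.mem_cons_self _ _)
      · refine ⟨by simp [hcard], ?_⟩
        intro a b hab
        rcases hcov' hab with ⟨u, rfl, hu⟩ | ⟨u, rfl, hu⟩ | ⟨rfl, rfl⟩ | ⟨rfl, rfl⟩
        · exact Or.inl (Multiset.mem_cons_of_mem (Multiset.mem_map_of_mem some hu))
        · exact Or.inr (Multiset.mem_cons_of_mem (Multiset.mem_map_of_mem some hu))
        · exact Or.inr (Multiset.mem_cons_self _ _)
        · exact Or.inl (Multiset.mem_cons_self _ _)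
    · intro D hD a b hab
      rcases adj_cases hab with ⟨u, w, rfl, rfl, h3⟩ | ⟨rfl, rfl⟩ | ⟨rfl, rfl⟩
      · -- attack on an original edge
        obtain ⟨C, hC, hDeq⟩ := hD
        obtain ⟨e, hDeq', he⟩ : ∃ e : Option V, D = e ::ₘ C.map some ∧
            (e = none ∨ e = some x) := by
          rcases hDeq with rfl | rfl
          · exact ⟨none, rfl, Or.inl rfl⟩
          · exact ⟨some x, rfl, Or.inr rfl⟩
        obtain ⟨C₂, hC₂, M, hvm, hdef⟩ := hF.2.2 C hC u w h3
        refine ⟨e ::ₘ C₂.map some, ⟨C₂, hC₂, ?_⟩,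
          (e, e) ::ₘ M.map (Prod.map some some), ⟨?_, ?_, ?_⟩, ?_⟩
        · rcases he with rfl | rfl
          · exact Or.inl rfl
          · exact Or.inr rfl
        · rw [hDeq']
          simp only [Multiset.map_cons, Multiset.map_map]
          have : (Prod.fst ∘ Prod.map some some : V × V → Option V)
              = some ∘ Prod.fst := rfl
          rw [this, ← Multiset.map_map, hvm.1]
        · simp only [Multiset.map_cons, Multiset.map_map]
          have : (Prod.snd ∘ Prod.map some some : V × V → Option V)
              = some ∘ Prod.snd := rfl
          rw [this, ← Multiset.map_map, hvm.2.1]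
        · intro p hp
          rcases Multiset.mem_cons.mp hp with rfl | hp
          · exact Or.inl rfl
          · rcases Multiset.mem_map.mp hp with ⟨q, hq, rfl⟩
            rcases hvm.2.2 q hq with h | h
            · exact Or.inl (by rw [Prod.map_fst, Prod.map_snd, h])
            · refine Or.inr ?_
              rw [Prod.map_fst, Prod.map_snd]
              exact adj_some_some h
        · rcases hdef with h | h
          · refine Or.inl (Multiset.mem_cons_of_mem ?_)
            simpa using Multiset.mem_map_of_mem (Prod.map some some) h
          · refine Or.inr (Multiset.mem_cons_of_mem ?_)
            simpa using Multiset.mem_map_of_mem (Prod.map some some) h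
      · -- attack on the pendant edge (none, some x)
        obtain ⟨D₂, hD₂, M, hvm, hmem⟩ := hpend D hD
        exact ⟨D₂, hD₂, M, hvm, hmem⟩
      · -- attack on the pendant edge (some x, none)
        obtain ⟨D₂, hD₂, M, hvm, hmem⟩ := hpend D hD
        exact ⟨D₂, hD₂, M, hvm, hmem.symm⟩
  exact Nat.sInf_le ⟨F', hdefense⟩

end Aux

/-- Let `G` be a connected graph satisfying the substructure property and `x` a
vertex of `G` such that, if `x` is a cut vertex, all `x`-components also satisfy the
substructure property. If `evc(G) < evc_x(G)`, then `G` is Type 1 with respect to `x`. -/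
theorem type1_of_evc_lt (V : Type) [Finite V] (G : SimpleGraph V)
    (hG : G.Connected) (hsub : SubstructureProperty G) (x : V)
    (hcomp : IsCutVertex G x → ∀ H : (delVert G x).ConnectedComponent,
      SubstructureProperty (G.induce (xCompSet G x H)))
    (hlt : evc G < evcOn G {x}) :
    evc (addPendant G x) = evcOn G {x} := by
  have h1 : evcOn G {x} ≤ evc (addPendant G x) := evcOn_le_evc_addPendant G x
  have h2 : evc (addPendant G x) ≤ evc G + 1 := evc_addPendant_le G x
  omega

end EVC
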